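/- Let n = 1, so the EACP C(a,b) is the 2-dimensional algebra on K² with basis {h,r} and multiplication h·r = r·h = (1/2)(a•h + b•r), h·h = 0, r·r = 0, for scalars a,b ∈ K. If (a,b) ≠ (0,0), then C(a,b) is isomorphic as a K-algebra (via a linear bijection φ with φ(x·y) = φ(x)·φ(y)) to exactly one of: C₁, the algebra with h·r = h (i.e. a = 2, b = 0), or C₂, the algebra with h·r = (1/2)(h + r) (i.e. a = 1, b = 1); namely to C₁ when a*b = 0 and to C₂ when a*b ≠ 0. -/

import Mathlib

/-- Multiplication of the 2-dimensional EACP `C(a,b)` on `K × K` with natural basis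
`h = (1,0)`, `r = (0,1)`: `h·r = r·h = (1/2)(a•h + b•r)`, `h·h = r·r = 0`. -/
def eacpMul2 {K : Type*} [Field K] (a b : K) (p q : K × K) : K × K :=
  ((1 / 2 : K) * (q.2 * p.1 + p.2 * q.1) * a, (1 / 2 : K) * (q.2 * p.1 + p.2 * q.1) * b)

/-- Two bilinear multiplications on `K × K` give isomorphic algebras if some linear
bijection intertwines them. -/
def IsAlgIso2 {K : Type*} [Field K] (m₁ m₂ : K × K → K × K → K × K) : Prop :=
  ∃ φ : (K × K) ≃ₗ[K] (K × K), ∀ x y, φ (m₁ x y) = m₂ (φ x) (φ y)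

/-!
The diagonal rescalings `(x, u) ↦ (α x, β u)` turn `C(a,b)` into `C(a/β, b/α)`, and swapping
the coordinates turns it into `C(b,a)`; these reach `(2,0)` when `ab = 0` and `(1,1)` otherwise.
The two normal forms are told apart by the isomorphism invariant "every product squares to
zero": in `C(a,b)` the square of `h·r = (a/2, b/2)` is `(ab/4)(a,b)`, which vanishes exactly
when `ab = 0`.
-/

section

variable {K : Type*} [Field K]

theorem IsAlgIso2.trans {m₁ m₂ m₃ : K × K → K × K → K × K}
    (h₁₂ : IsAlgIso2 m₁ m₂) (h₂₃ : IsAlgIso2 m₂ m₃) : IsAlgIso2 m₁ m₃ := by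
  obtain ⟨φ, hφ⟩ := h₁₂
  obtain ⟨ψ, hψ⟩ := h₂₃
  exact ⟨φ.trans ψ, fun x y => by simp [hφ, hψ]⟩

def ProductsSquareZero (m : K × K → K × K → K × K) : Prop :=
  ∀ x y, m (m x y) (m x y) = 0

theorem IsAlgIso2.productsSquareZero {m₁ m₂ : K × K → K × K → K × K}
    (h : IsAlgIso2 m₁ m₂) (h₁ : ProductsSquareZero m₁) : ProductsSquareZero m₂ := by
  obtain ⟨φ, hφ⟩ := h
  intro x y
  obtain ⟨x, rfl⟩ := φ.surjective x
  obtain ⟨y, rfl⟩ := φ.surjective y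
  rw [← hφ, ← hφ, h₁, map_zero]

theorem isAlgIso2_eacpMul2_swap (a b : K) : IsAlgIso2 (eacpMul2 a b) (eacpMul2 b a) :=
  ⟨LinearEquiv.prodComm K K K, fun x y => by
    simp only [LinearEquiv.prodComm_apply, eacpMul2, Prod.swap, Prod.mk.injEq]
    constructor <;> ring⟩

theorem isAlgIso2_eacpMul2_scale (a b : K) {α β : K} (hα : α ≠ 0) (hβ : β ≠ 0) :
    IsAlgIso2 (eacpMul2 (β * a) (α * b)) (eacpMul2 a b) :=
  ⟨(LinearEquiv.smulOfNeZero K K α hα).prodCongr (LinearEquiv.smulOfNeZero K K β hβ),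
    fun x y => by
      simp only [LinearEquiv.prodCongr_apply, LinearEquiv.smulOfNeZero_apply, smul_eq_mul,
        eacpMul2, Prod.mk.injEq]
      constructor <;> ring⟩

theorem isAlgIso2_eacpMul2_two_zero (h2 : (2 : K) ≠ 0) {a : K} (ha : a ≠ 0) :
    IsAlgIso2 (eacpMul2 a 0) (eacpMul2 2 0) := by
  simpa [div_mul_cancel₀ a h2] using
    isAlgIso2_eacpMul2_scale (2 : K) 0 one_ne_zero (div_ne_zero ha h2)

theorem isAlgIso2_eacpMul2_one_one {a b : K} (ha : a ≠ 0) (hb : b ≠ 0) :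
    IsAlgIso2 (eacpMul2 a b) (eacpMul2 1 1) := by
  simpa using isAlgIso2_eacpMul2_scale (1 : K) 1 hb ha

theorem productsSquareZero_eacpMul2_iff (h2 : (2 : K) ≠ 0) (a b : K) :
    ProductsSquareZero (eacpMul2 a b) ↔ a * b = 0 := by
  constructor
  · intro h
    have hsq := congrArg Prod.fst (h (1, 0) (0, 1))
    simp only [eacpMul2, Prod.fst_zero] at hsq
    simpa [h2, ← two_mul, or_comm] using hsq
  · intro hab x y
    simp only [eacpMul2, Prod.mk_eq_zero]
    constructor
    · linear_combination 2 * (1 / 2 : K) ^ 3 * (y.2 * x.1 + x.2 * y.1) ^ 2 * a * hab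
    · linear_combination 2 * (1 / 2 : K) ^ 3 * (y.2 * x.1 + x.2 * y.1) ^ 2 * b * hab

end

theorem eacp2_classification {K : Type*} [Field K] (h2 : (2 : K) ≠ 0)
    (a b : K) (hab : (a, b) ≠ ((0 : K), (0 : K))) :
    (a * b = 0 → IsAlgIso2 (eacpMul2 a b) (eacpMul2 (2 : K) (0 : K))) ∧
      (a * b ≠ 0 → IsAlgIso2 (eacpMul2 a b) (eacpMul2 (1 : K) (1 : K))) ∧
      ¬ IsAlgIso2 (eacpMul2 (2 : K) (0 : K)) (eacpMul2 (1 : K) (1 : K)) := by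
  refine ⟨fun hprod => ?_, fun hprod => ?_, fun hiso => ?_⟩
  · rcases mul_eq_zero.mp hprod with rfl | rfl
    · have hb : b ≠ 0 := fun hb => hab (by rw [hb])
      exact (isAlgIso2_eacpMul2_swap 0 b).trans (isAlgIso2_eacpMul2_two_zero h2 hb)
    · exact isAlgIso2_eacpMul2_two_zero h2 fun ha => hab (by rw [ha])
  · exact isAlgIso2_eacpMul2_one_one (left_ne_zero_of_mul hprod) (right_ne_zero_of_mul hprod)
  · have hsq := hiso.productsSquareZero ((productsSquareZero_eacpMul2_iff h2 2 0).2 (mul_zero 2))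
    simpa using (productsSquareZero_eacpMul2_iff h2 1 1).1 hsq
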